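/- arXiv:2507.08390 — 2 statements merged into one kernel-verified Lean document; each statement's English description precedes it below -/
import Mathlib

section
/- Let V be a nonempty finite type, T ≥ 1, and for each t = 1,…,T let K_t : V → V → ℝ be a Markov transition kernel on V. Fix β > 0, r : V → ℝ, and define partial rewards r_0 := r and r_t(x) := β·log( Σ_{x_0,…,x_{t-1}} (∏_{u=1}^{t} K_u(x_u,x_{u-1}))·exp(r(x_0)/β) ) at x_t = x. Then for every 1 ≤ t ≤ T and every x ∈ V, the importance weights w(y) := exp((r_{t-1}(y) − r_t(x))/β) satisfy Σ_{y∈V} K_t(x,y)·w(y) = 1; equivalently, the function y ↦ K_t(x,y)·exp((r_{t-1}(y) − r_t(x))/β) is a PMF on V. -/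
noncomputable section

/-- Extend a path `x_0,…,x_{t-1}` (given by `path : Fin t → V`) to all of `ℕ`
by setting `x_i = x` for every `i ≥ t`; in particular the endpoint is `x_t = x`. -/
def seqExt {V : Type*} {t : ℕ} (path : Fin t → V) (x : V) (i : ℕ) : V :=
  if h : i < t then path ⟨i, h⟩ else x

/-- `pathSum K r β t x = Σ_{x_0,…,x_{t-1} ∈ V} (∏_{u=1}^{t} K_u(x_u, x_{u-1})) · exp(r(x_0)/β)`,
evaluated at `x_t = x`. -/
def pathSum {V : Type*} [Fintype V] (K : ℕ → V → V → ℝ) (r : V → ℝ) (β : ℝ)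
    (t : ℕ) (x : V) : ℝ :=
  ∑ path : Fin t → V,
    (∏ u ∈ Finset.range t, K (u + 1) (seqExt path x (u + 1)) (seqExt path x u)) *
      Real.exp (r (seqExt path x 0) / β)

lemma seqExt_snoc {V : Type*} {t : ℕ} (path : Fin t → V) (y x : V) (i : ℕ) (hi : i ≤ t) :
    seqExt (Fin.snoc path y) x i = seqExt path y i := by
  unfold seqExt
  rcases lt_or_eq_of_le hi with h | h
  · rw [dif_pos h, dif_pos (Nat.lt_succ_of_lt h)]
    simp [Fin.snoc, h]
  · subst h
    rw [dif_neg (lt_irrefl i), dif_pos (Nat.lt_succ_self i)]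
    simp [Fin.snoc]

lemma pathSum_zero {V : Type*} [Fintype V] (K : ℕ → V → V → ℝ) (r : V → ℝ) (β : ℝ) (x : V) :
    pathSum K r β 0 x = Real.exp (r x / β) := by
  simp [pathSum, seqExt]

lemma pathSum_succ {V : Type*} [Fintype V] (K : ℕ → V → V → ℝ) (r : V → ℝ) (β : ℝ)
    (t : ℕ) (x : V) :
    pathSum K r β (t + 1) x = ∑ y, K (t + 1) x y * pathSum K r β t y := by
  rw [pathSum]
  rw [← Fintype.sum_equiv (Fin.snocEquiv (fun _ : Fin (t + 1) => V))
    (fun p : V × (Fin t → V) => K (t + 1) x p.1 *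
      ((∏ u ∈ Finset.range t, K (u + 1) (seqExt p.2 p.1 (u + 1)) (seqExt p.2 p.1 u)) *
        Real.exp (r (seqExt p.2 p.1 0) / β)))
    (fun path : Fin (t + 1) → V =>
      (∏ u ∈ Finset.range t.succ, K (u + 1) (seqExt path x (u + 1)) (seqExt path x u)) *
        Real.exp (r (seqExt path x 0) / β)) ?_]
  · rw [Fintype.sum_prod_type]
    simp [pathSum, Finset.mul_sum]
  · rintro ⟨y, path⟩
    dsimp only
    have he : (Fin.snocEquiv (fun _ : Fin (t + 1) => V)) (y, path) = Fin.snoc path y := by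
      rfl
    rw [he]
    rw [Finset.prod_range_succ]
    have h1 : seqExt (Fin.snoc path y) x (t + 1) = x := by
      unfold seqExt; rw [dif_neg (lt_irrefl (t + 1))]
    have h2 : seqExt (Fin.snoc path y) x t = y := by
      rw [seqExt_snoc path y x t le_rfl]
      unfold seqExt; rw [dif_neg (lt_irrefl t)]
    rw [h1, h2, seqExt_snoc path y x 0 (Nat.zero_le t)]
    have h3 : ∀ u ∈ Finset.range t,
        K (u + 1) (seqExt (Fin.snoc path y) x (u + 1)) (seqExt (Fin.snoc path y) x u)
          = K (u + 1) (seqExt path y (u + 1)) (seqExt path y u) := by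
      intro u hu
      rw [Finset.mem_range] at hu
      rw [seqExt_snoc path y x (u + 1) hu, seqExt_snoc path y x u hu.le]
    rw [Finset.prod_congr rfl h3]
    ring

/-- The partial rewards: `r_0 := r` and `r_t(x) := β · log(pathSum K r β t x)` for `t ≥ 1`. -/
def partialReward {V : Type*} [Fintype V] (K : ℕ → V → V → ℝ) (r : V → ℝ) (β : ℝ) :
    ℕ → V → ℝ
  | 0 => r
  | t + 1 => fun x => β * Real.log (pathSum K r β (t + 1) x)


lemma pathSum_pos {V : Type*} [Fintype V] (T : ℕ)
    (K : ℕ → V → V → ℝ)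
    (hK : ∀ t, 1 ≤ t → t ≤ T → (∀ x y, 0 ≤ K t x y) ∧ (∀ x, ∑ y, K t x y = 1))
    (β : ℝ) (r : V → ℝ) :
    ∀ t, t ≤ T → ∀ x, 0 < pathSum K r β t x := by
  intro t
  induction t with
  | zero => intro _ x; rw [pathSum_zero]; exact Real.exp_pos _
  | succ t ih =>
    intro ht x
    obtain ⟨hnn, hsum⟩ := hK (t + 1) (Nat.succ_le_succ (Nat.zero_le t)) ht
    rw [pathSum_succ]
    apply Finset.sum_pos'
    · intro y _
      exact mul_nonneg (hnn x y) (ih (Nat.le_of_succ_le ht) y).le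
    · by_contra h
      push_neg at h
      have : ∀ y ∈ Finset.univ, K (t + 1) x y = 0 := by
        intro y _
        rcases (hnn x y).lt_or_eq with h' | h'
        · exact absurd (mul_pos h' (ih (Nat.le_of_succ_le ht) y))
            (not_lt.2 (h y (Finset.mem_univ y)))
        · exact h'.symm
      have := hsum x
      rw [Finset.sum_congr rfl ‹∀ y ∈ Finset.univ, K (t + 1) x y = 0›] at this
      simp at this

lemma exp_partialReward {V : Type*} [Fintype V] (T : ℕ)
    (K : ℕ → V → V → ℝ)
    (hK : ∀ t, 1 ≤ t → t ≤ T → (∀ x y, 0 ≤ K t x y) ∧ (∀ x, ∑ y, K t x y = 1))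
    (β : ℝ) (hβ : 0 < β) (r : V → ℝ) :
    ∀ t, t ≤ T → ∀ x, Real.exp (partialReward K r β t x / β) = pathSum K r β t x := by
  intro t ht x
  cases t with
  | zero => rw [pathSum_zero]; rfl
  | succ t =>
    show Real.exp (β * Real.log (pathSum K r β (t + 1) x) / β) = _
    rw [mul_comm, mul_div_assoc, div_self (ne_of_gt hβ), mul_one,
      Real.exp_log (pathSum_pos T K hK β r (t + 1) ht x)]

end

/-- The SMC importance weights `w(y) = exp((r_{t-1}(y) − r_t(x))/β)` have unit conditional
expectation: `y ↦ K_t(x,y)·w(y)` is a PMF on `V`, for every `1 ≤ t ≤ T` and `x`. -/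
theorem importance_weights_unit_expectation
    {V : Type*} [Fintype V] [Nonempty V]
    (T : ℕ) (hT : 1 ≤ T)
    (K : ℕ → V → V → ℝ)
    (hK : ∀ t, 1 ≤ t → t ≤ T → (∀ x y, 0 ≤ K t x y) ∧ (∀ x, ∑ y, K t x y = 1))
    (β : ℝ) (hβ : 0 < β) (r : V → ℝ) :
    ∀ t, 1 ≤ t → t ≤ T → ∀ x : V,
      (∀ y, 0 ≤ K t x y *
          Real.exp ((partialReward K r β (t - 1) y - partialReward K r β t x) / β)) ∧
      ∑ y, K t x y *
          Real.exp ((partialReward K r β (t - 1) y - partialReward K r β t x) / β) = 1 := by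
  intro t ht1 htT x
  obtain ⟨hnn, _⟩ := hK t ht1 htT
  constructor
  · intro y
    exact mul_nonneg (hnn x y) (Real.exp_pos _).le
  · obtain ⟨s, rfl⟩ : ∃ s, t = s + 1 := ⟨t - 1, (Nat.succ_pred_eq_of_pos ht1).symm⟩
    simp only [Nat.add_sub_cancel]
    have key : ∀ y, Real.exp ((partialReward K r β s y - partialReward K r β (s + 1) x) / β)
        = pathSum K r β s y / pathSum K r β (s + 1) x := by
      intro y
      rw [sub_div, Real.exp_sub,
        exp_partialReward T K hK β hβ r s (Nat.le_of_succ_le htT) y,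
        exp_partialReward T K hK β hβ r (s + 1) htT x]
    simp only [key]
    have hpos := pathSum_pos T K hK β r (s + 1) htT x
    rw [show ∀ f : V → ℝ, ∑ y, K (s+1) x y * (pathSum K r β s y / pathSum K r β (s+1) x)
        = (∑ y, K (s+1) x y * pathSum K r β s y) / pathSum K r β (s+1) x from
        fun _ => by rw [Finset.sum_div]; exact Finset.sum_congr rfl fun y _ => by ring]
    · rw [← pathSum_succ, div_self (ne_of_gt hpos)]
    · exact fun _ => 0
end

section
/- Let V be a nonempty finite type, T ≥ 1, μ_T a PMF on V (initial distribution), and for each t = 1,…,T let K_t : V → V → ℝ be a Markov transition kernel on V. Fix β > 0, r : V → ℝ, and define partial rewards r_0 := r and r_t(x) := β·log( Σ_{x_0,…,x_{t-1}} (∏_{u=1}^{t} K_u(x_u,x_{u-1}))·exp(r(x_0)/β) ) at x_t = x. Define the joint chain law P(x_0,…,x_T) := μ_T(x_T)·∏_{t=1}^{T} K_t(x_t,x_{t-1}), the constant Z := Σ_{x∈V} μ_T(x)·exp(r_T(x)/β), the tilted initial distribution μ*_T(x) := μ_T(x)·exp(r_T(x)/β)/Z, and the per-step optimal conditionals p*_t(y|x)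 := K_t(x,y)·exp((r_{t-1}(y) − r_t(x))/β). Then for all x_0,…,x_T ∈ V: μ*_T(x_T)·∏_{t=1}^{T} p*_t(x_{t-1}|x_t) = P(x_0,…,x_T)·exp(r(x_0)/β)/Z. -/
open Finset Real

theorem prod_range_exp_sub_div (f : ℕ → ℝ) (β : ℝ) (T : ℕ) :
    ∏ u ∈ range T, exp ((f u - f (u + 1)) / β) = exp ((f 0 - f T) / β) := by
  rw [← exp_sum, ← sum_div, sum_range_sub']

theorem mul_exp_div_mul_prod_mul_exp_sub_div (m Z β : ℝ) (k f : ℕ → ℝ) (T : ℕ) :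
    (m * exp (f T / β) / Z) * ∏ u ∈ range T, (k u * exp ((f u - f (u + 1)) / β)) =
      (m * ∏ u ∈ range T, k u) * exp (f 0 / β) / Z := by
  have hcancel : exp (f T / β) * exp ((f 0 - f T) / β) = exp (f 0 / β) := by
    rw [← exp_add]
    ring_nf
  rw [prod_mul_distrib, prod_range_exp_sub_div]
  linear_combination (m * (∏ u ∈ range T, k u) / Z) * hcancel

theorem tilted_chain_factorization_general
    {V : Type*} [Fintype V]
    (T : ℕ)
    (μT : V → ℝ)
    (K : ℕ → V → V → ℝ)
    (β : ℝ) (r : V → ℝ)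
    (Z : ℝ)
    (xs : ℕ → V) :
    (μT (xs T) * Real.exp (partialReward K r β T (xs T) / β) / Z) *
      ∏ u ∈ Finset.range T,
        (K (u + 1) (xs (u + 1)) (xs u) *
          Real.exp ((partialReward K r β u (xs u) -
            partialReward K r β (u + 1) (xs (u + 1))) / β)) =
    (μT (xs T) * ∏ u ∈ Finset.range T, K (u + 1) (xs (u + 1)) (xs u)) *
      Real.exp (r (xs 0) / β) / Z :=
  mul_exp_div_mul_prod_mul_exp_sub_div (μT (xs T)) Z β (fun u => K (u + 1) (xs (u + 1)) (xs u))
    (fun u => partialReward K r β u (xs u)) T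

/-- Telescoping factorization of the tilted chain: the Markov chain with tilted initial
distribution `μ*_T(x) = μ_T(x)·exp(r_T(x)/β)/Z` and per-step optimal conditionals
`p*_t(y|x) = K_t(x,y)·exp((r_{t-1}(y) − r_t(x))/β)` has joint law equal to the globally
reward-tilted chain law `P(x_{0:T})·exp(r(x_0)/β)/Z`, where
`P(x_0,…,x_T) = μ_T(x_T)·∏_{t=1}^{T} K_t(x_t, x_{t-1})`. -/
theorem tilted_chain_factorization
    {V : Type*} [Fintype V] [Nonempty V]
    (T : ℕ) (hT : 1 ≤ T)
    (μT : V → ℝ) (hμ_nonneg : ∀ x, 0 ≤ μT x) (hμ_sum : ∑ x, μT x = 1)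
    (K : ℕ → V → V → ℝ)
    (hK : ∀ t, 1 ≤ t → t ≤ T → (∀ x y, 0 ≤ K t x y) ∧ (∀ x, ∑ y, K t x y = 1))
    (β : ℝ) (hβ : 0 < β) (r : V → ℝ)
    (Z : ℝ) (hZ : Z = ∑ x, μT x * Real.exp (partialReward K r β T x / β))
    (xs : ℕ → V) :
    (μT (xs T) * Real.exp (partialReward K r β T (xs T) / β) / Z) *
      ∏ u ∈ Finset.range T,
        (K (u + 1) (xs (u + 1)) (xs u) *
          Real.exp ((partialReward K r β u (xs u) -
            partialReward K r β (u + 1) (xs (u + 1))) / β)) =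
    (μT (xs T) * ∏ u ∈ Finset.range T, K (u + 1) (xs (u + 1)) (xs u)) *
      Real.exp (r (xs 0) / β) / Z :=
  tilted_chain_factorization_general T μT K β r Z xs
end
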